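/- Let P be a two-orbit n-polytope in class 2_I with base flag Φ, stabilizer subgroups Γ_{Φ_J} of the subchains Φ_J = {Φ_j : j ∈ J} (J ⊆ N), and distinguished subgroups Γ_J = ⟨ρ_i, α_{j,k}, α_{j,i,j} | i ∈ I ∩ (N\J), j,k ∈ (N\I) ∩ (N\J)⟩. Then Γ_{Φ_J} = Γ_J for every J ⊆ N. -/

import Mathlib

/-- An abstract polytope of rank `n`, presented by a partially ordered type of faces
with a strictly monotone rank function onto `{-1, 0, ..., n}`, such that every flag
(maximal chain) has exactly one face of each rank (`faceAt`), every flag has a unique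
`i`-adjacent flag for each `i = 0, ..., n-1` (the diamond condition, via `adj`), and
which is strongly flag-connected. -/
structure AbstractPolytope (n : ℕ) (Face : Type*) [PartialOrder Face] where
  rank : Face → ℤ
  rank_strictMono : ∀ {F G : Face}, F < G → rank F < rank G
  rank_le : ∀ F : Face, -1 ≤ rank F ∧ rank F ≤ (n : ℤ)
  /-- the unique face of rank `i` in the flag `Φ`, for `-1 ≤ i ≤ n` -/
  faceAt : Flag Face → ℤ → Face
  faceAt_mem : ∀ (Φ : Flag Face) (i : ℤ), -1 ≤ i → i ≤ (n : ℤ) → faceAt Φ i ∈ Φ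
  faceAt_rank : ∀ (Φ : Flag Face) (i : ℤ), -1 ≤ i → i ≤ (n : ℤ) → rank (faceAt Φ i) = i
  faceAt_eq : ∀ (Φ : Flag Face) (F : Face), F ∈ Φ → faceAt Φ (rank F) = F
  /-- the unique `i`-adjacent flag of `Φ`, for `0 ≤ i ≤ n-1` -/
  adj : Flag Face → ℕ → Flag Face
  adj_ne : ∀ (Φ : Flag Face) (i : ℕ), i < n → adj Φ i ≠ Φ
  adj_mem : ∀ (Φ : Flag Face) (i : ℕ), i < n →
    ∀ F ∈ Φ, rank F ≠ (i : ℤ) → F ∈ adj Φ i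
  adj_unique : ∀ (Φ Ψ : Flag Face) (i : ℕ), i < n → Ψ ≠ Φ →
    (∀ F ∈ Φ, rank F ≠ (i : ℤ) → F ∈ Ψ) → Ψ = adj Φ i
  /-- strong flag-connectedness: any two flags are joined by a sequence of successively
  adjacent flags, with all adjacencies at ranks not occurring among their common faces -/
  connected : ∀ Φ Ψ : Flag Face, ∃ (l : ℕ) (c : ℕ → Flag Face), c 0 = Φ ∧ c l = Ψ ∧
    ∀ m < l, ∃ i : ℕ, i < n ∧ c (m + 1) = adj (c m) i ∧
      ∀ F : Face, F ∈ Φ → F ∈ Ψ → rank F ≠ (i : ℤ)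

namespace AbstractPolytope

variable {n : ℕ} {Face : Type*} [PartialOrder Face]

/-- The automorphism group `Γ(P)`: order automorphisms of the set of faces.
It acts on flags via `Flag.map`; `g • Φ` denotes the image flag. -/
instance : MulAction (Face ≃o Face) (Flag Face) where
  smul g Φ := Flag.map g Φ
  one_smul Φ := by
    show Flag.map 1 Φ = Φ
    ext x
    simp [Flag.map, Flag.ofIsMaxChain]
  mul_smul g h Φ := by
    show Flag.map (g * h) Φ = Flag.map g (Flag.map h Φ)
    ext x
    simp [Flag.map, Flag.ofIsMaxChain, Set.image_image]

lemma smul_flag_def (g : Face ≃o Face) (Φ : Flag Face) : g • Φ = Flag.map g Φ := rfl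

/-- Two flags lie in the same orbit under the automorphism group. -/
def SameOrbit (Φ Ψ : Flag Face) : Prop := ∃ g : Face ≃o Face, g • Φ = Ψ

/-- The polytope has exactly two orbits on flags. -/
def TwoOrbit (_A : AbstractPolytope n Face) : Prop :=
  ∃ Φ Ψ : Flag Face, ¬ SameOrbit Φ Ψ ∧ ∀ X : Flag Face, SameOrbit X Φ ∨ SameOrbit X Ψ

/-- `I` is the class type set of the two-orbit polytope `A`: it consists precisely of
those ranks `i ∈ {0,...,n-1}` such that every flag and its `i`-adjacent flag lie in the
same orbit; that is, `A` is in the class `2_I`. -/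
def InClass (A : AbstractPolytope n Face) (I : Set ℕ) : Prop :=
  (∀ i ∈ I, i < n) ∧ ∀ i : ℕ, i < n → (i ∈ I ↔ ∀ Φ : Flag Face, SameOrbit Φ (A.adj Φ i))

/-- The stabilizer in the automorphism group of a face `F`. -/
def faceStab (_A : AbstractPolytope n Face) (F : Face) : Subgroup (Face ≃o Face) where
  carrier := {g : Face ≃o Face | g F = F}
  one_mem' := rfl
  mul_mem' := by
    intro a b ha hb
    show (a * b) F = F
    rw [RelIso.mul_apply]
    rw [show b F = F from hb, show a F = F from ha]
  inv_mem' := by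
    intro a ha
    show a⁻¹ F = F
    conv_lhs => rw [← show a F = F from ha]
    exact a.symm_apply_apply F

lemma mem_faceStab {A : AbstractPolytope n Face} {F : Face} {g : Face ≃o Face} :
    g ∈ A.faceStab F ↔ g F = F := Iff.rfl

end AbstractPolytope

/-!
An automorphism fixing the faces `Φ_j`, `j ∈ J`, sends `Φ` to a flag that, by strong
flag-connectedness, is reached from `Φ` by adjacencies at ranks outside `J`. Along this path
every flag is `h • Φ` or `h • Φ^j` (`j ∉ I ∪ J`) with `h ∈ Γ_J`: an `i`-step leads from `h • Φ`
to `hρ_i • Φ` if `i ∈ I` and to `h • Φ^i` otherwise, and from `h • Φ^j` to `hα_{j,i} • Φ` if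
`i ∉ I` and to `hα_{j,i,j} • Φ^j` otherwise. Since `Φ^j` is not in the orbit of `Φ` and `Γ(P)`
acts freely on flags, the endpoint is `g • Φ` with `g ∈ Γ_J`. Conversely, each generator of
`Γ_J` moves `Φ` only through adjacencies at ranks outside `J`, so it fixes `Φ_J`.
-/

namespace AbstractPolytope

/-- The subgroup `Γ_J`; `α j k` stands for `α_{j,k}` and `β j i` for `α_{j,i,j}`. -/
def distinguishedSubgroup {Face : Type*} [PartialOrder Face] (n : ℕ) (I J : Set ℕ)
    (ρ : ℕ → (Face ≃o Face)) (α β : ℕ → ℕ → (Face ≃o Face)) : Subgroup (Face ≃o Face) :=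
  Subgroup.closure
    ({x : Face ≃o Face | ∃ i, i ∈ I ∧ i ∉ J ∧ x = ρ i}
      ∪ {x : Face ≃o Face | ∃ j k : ℕ, j < n ∧ k < n ∧ j ∉ I ∧ k ∉ I ∧
          j ∉ J ∧ k ∉ J ∧ x = α j k}
      ∪ {x : Face ≃o Face | ∃ j i : ℕ, i ∈ I ∧ i ∉ J ∧ j < n ∧ j ∉ I ∧ j ∉ J ∧
          x = β j i})

section DistinguishedSubgroup

variable {Face : Type*} [PartialOrder Face] {n : ℕ} {I J : Set ℕ} {ρ : ℕ → (Face ≃o Face)}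
  {α β : ℕ → ℕ → (Face ≃o Face)}

lemma rho_mem_distinguishedSubgroup (i : ℕ) (hiI : i ∈ I) (hiJ : i ∉ J) :
    ρ i ∈ distinguishedSubgroup n I J ρ α β :=
  Subgroup.subset_closure (Or.inl (Or.inl ⟨i, hiI, hiJ, rfl⟩))

lemma alpha_mem_distinguishedSubgroup (j k : ℕ) (hjn : j < n) (hkn : k < n) (hjI : j ∉ I)
    (hkI : k ∉ I) (hjJ : j ∉ J) (hkJ : k ∉ J) : α j k ∈ distinguishedSubgroup n I J ρ α β :=
  Subgroup.subset_closure (Or.inl (Or.inr ⟨j, k, hjn, hkn, hjI, hkI, hjJ, hkJ, rfl⟩))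

lemma beta_mem_distinguishedSubgroup (j i : ℕ) (hiI : i ∈ I) (hiJ : i ∉ J) (hjn : j < n)
    (hjI : j ∉ I) (hjJ : j ∉ J) : β j i ∈ distinguishedSubgroup n I J ρ α β :=
  Subgroup.subset_closure (Or.inr ⟨j, i, hiI, hiJ, hjn, hjI, hjJ, rfl⟩)

end DistinguishedSubgroup

variable {n : ℕ} {Face : Type*} [PartialOrder Face] (A : AbstractPolytope n Face)

lemma mem_smul_flag_iff {g : Face ≃o Face} {Ψ : Flag Face} {F : Face} :
    F ∈ g • Ψ ↔ ∃ G ∈ Ψ, g G = F := by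
  rw [smul_flag_def, ← SetLike.mem_coe, Flag.coe_map]
  rfl

lemma apply_mem_smul_flag (g : Face ≃o Face) {Ψ : Flag Face} {F : Face} (h : F ∈ Ψ) :
    g F ∈ g • Ψ :=
  mem_smul_flag_iff.2 ⟨F, h, rfl⟩

lemma exists_flag_mem (F : Face) : ∃ Ψ : Flag Face, F ∈ Ψ := by
  obtain ⟨M, hM, hFM⟩ := (IsChain.singleton : IsChain (· ≤ ·) {F}).exists_maxChain
  exact ⟨Flag.ofIsMaxChain M hM, hFM rfl⟩

lemma strictMono_rank : StrictMono A.rank := fun _ _ h => A.rank_strictMono h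

lemma eq_of_mem_of_rank_eq {Ψ : Flag Face} {F G : Face} (hF : F ∈ Ψ) (hG : G ∈ Ψ)
    (h : A.rank F = A.rank G) : F = G := by
  rw [← A.faceAt_eq Ψ F hF, ← A.faceAt_eq Ψ G hG, h]

lemma lt_of_mem_of_rank_lt {Ψ : Flag Face} {F G : Face} (hF : F ∈ Ψ) (hG : G ∈ Ψ)
    (h : A.rank F < A.rank G) : F < G := by
  rcases Ψ.le_or_le hF hG with hFG | hGF
  · exact hFG.lt_of_ne (by rintro rfl; exact h.false)
  · exact absurd (A.strictMono_rank.monotone hGF) h.not_ge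

/-- On a flag `Ψ ∋ F`, `i ↦ rank (g Ψ_i)` is a strictly monotone self-map of the finite chain
`{-1, …, n}`, hence the identity. -/
lemma rank_apply (g : Face ≃o Face) (F : Face) : A.rank (g F) = A.rank F := by
  obtain ⟨Ψ, hΨ⟩ := exists_flag_mem F
  let f : Set.Icc (-1 : ℤ) n → Set.Icc (-1 : ℤ) n :=
    fun i => ⟨A.rank (g (A.faceAt Ψ i)), A.rank_le _⟩
  have hf : StrictMono f := fun i j hij => A.strictMono_rank <| g.strictMono <|
    A.lt_of_mem_of_rank_lt (A.faceAt_mem Ψ i i.2.1 i.2.2) (A.faceAt_mem Ψ j j.2.1 j.2.2)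
      (by rwa [A.faceAt_rank Ψ i i.2.1 i.2.2, A.faceAt_rank Ψ j j.2.1 j.2.2])
  have hfF := congrArg Subtype.val (congrFun hf.eq_id ⟨A.rank F, A.rank_le F⟩)
  simpa [f, A.faceAt_eq Ψ F hΨ] using hfF

include A in
lemma apply_eq_self_of_mem_smul {g : Face ≃o Face} {Ψ : Flag Face} {F : Face}
    (hF : F ∈ Ψ) (hgF : F ∈ g • Ψ) : g F = F :=
  A.eq_of_mem_of_rank_eq (apply_mem_smul_flag g hF) hgF (A.rank_apply g F)

lemma smul_adj (g : Face ≃o Face) (Ψ : Flag Face) {i : ℕ} (hi : i < n) :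
    g • A.adj Ψ i = A.adj (g • Ψ) i := by
  refine A.adj_unique (g • Ψ) (g • A.adj Ψ i) i hi
    (fun h => A.adj_ne Ψ i hi (MulAction.injective g h)) ?_
  intro F hF hFi
  obtain ⟨G, hG, rfl⟩ := mem_smul_flag_iff.1 hF
  rw [A.rank_apply] at hFi
  exact apply_mem_smul_flag g (A.adj_mem Ψ i hi G hG hFi)

lemma adj_adj (Ψ : Flag Face) {i : ℕ} (hi : i < n) : A.adj (A.adj Ψ i) i = Ψ := by
  refine (A.adj_unique (A.adj Ψ i) Ψ i hi (A.adj_ne Ψ i hi).symm fun F hF hFi => ?_).symm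
  obtain ⟨hlo, hhi⟩ := A.rank_le F
  have hrank := A.faceAt_rank Ψ _ hlo hhi
  have hmem : A.faceAt Ψ (A.rank F) ∈ A.adj Ψ i :=
    A.adj_mem Ψ i hi _ (A.faceAt_mem Ψ _ hlo hhi) (by rwa [hrank])
  rw [← A.eq_of_mem_of_rank_eq hmem hF hrank]
  exact A.faceAt_mem Ψ _ hlo hhi

def AdjOutside (J : Set ℕ) (Ψ Ψ' : Flag Face) : Prop :=
  ∃ i < n, i ∉ J ∧ Ψ' = A.adj Ψ i

open Relation

lemma reflTransGen_adjOutside_of_faceAt_mem {J : Set ℕ} {Φ Ψ : Flag Face}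
    (hΨ : ∀ j ∈ J, A.faceAt Φ (j : ℤ) ∈ Ψ) : ReflTransGen (A.AdjOutside J) Φ Ψ := by
  obtain ⟨l, c, rfl, rfl, hstep⟩ := A.connected Φ Ψ
  suffices ∀ m ≤ l, ReflTransGen (A.AdjOutside J) (c 0) (c m) from this l le_rfl
  intro m
  induction m with
  | zero => exact fun _ => .refl
  | succ m ih =>
    intro hm
    obtain ⟨i, hin, hadj, hcommon⟩ := hstep m (by omega)
    refine (ih (by omega)).tail ⟨i, hin, fun hiJ => ?_, hadj⟩
    exact hcommon _ (A.faceAt_mem _ _ (by omega) (by omega)) (hΨ i hiJ)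
      (A.faceAt_rank _ _ (by omega) (by omega))

lemma mem_of_reflTransGen_adjOutside {J : Set ℕ} {Ψ Ψ' : Flag Face}
    (h : ReflTransGen (A.AdjOutside J) Ψ Ψ') {F : Face} (hF : F ∈ Ψ) {j : ℕ} (hj : j ∈ J)
    (hFj : A.rank F = j) : F ∈ Ψ' := by
  induction h with
  | refl => exact hF
  | tail _ hstep ih =>
    obtain ⟨i, hin, hiJ, rfl⟩ := hstep
    exact A.adj_mem _ i hin F ih (by rw [hFj]; exact_mod_cast ne_of_mem_of_not_mem hj hiJ)

lemma mem_iInf_faceStab_iff {J : Set ℕ} (hJ : ∀ j ∈ J, j < n) (Φ : Flag Face)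
    (g : Face ≃o Face) :
    g ∈ ⨅ j ∈ J, A.faceStab (A.faceAt Φ (j : ℤ)) ↔
      ReflTransGen (A.AdjOutside J) Φ (g • Φ) := by
  have hΦJ : ∀ j ∈ J, A.faceAt Φ (j : ℤ) ∈ Φ ∧ A.rank (A.faceAt Φ (j : ℤ)) = j := fun j hj =>
    have := hJ j hj
    ⟨A.faceAt_mem Φ _ (by omega) (by omega), A.faceAt_rank Φ _ (by omega) (by omega)⟩
  simp only [Subgroup.mem_iInf, mem_faceStab]
  constructor
  · intro hg
    refine A.reflTransGen_adjOutside_of_faceAt_mem fun j hj => ?_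
    rw [← hg j hj]
    exact apply_mem_smul_flag g (hΦJ j hj).1
  · intro hpath j hj
    exact A.apply_eq_self_of_mem_smul (hΦJ j hj).1 <|
      A.mem_of_reflTransGen_adjOutside hpath (hΦJ j hj).1 hj (hΦJ j hj).2

include A in
lemma eq_one_of_smul_eq_self {g : Face ≃o Face} {Φ : Flag Face} (h : g • Φ = Φ) : g = 1 := by
  have hfix (Ψ : Flag Face) : g • Ψ = Ψ := by
    have hpath : ReflTransGen (A.AdjOutside ∅) Φ Ψ :=
      A.reflTransGen_adjOutside_of_faceAt_mem (by simp)
    induction hpath with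
    | refl => exact h
    | tail _ hstep ih =>
      obtain ⟨i, hin, -, rfl⟩ := hstep
      rw [A.smul_adj g _ hin, ih]
  ext F
  obtain ⟨Ψ, hΨ⟩ := exists_flag_mem F
  exact A.apply_eq_self_of_mem_smul hΨ ((hfix Ψ).symm ▸ hΨ)

include A in
lemma eq_of_smul_eq {g h : Face ≃o Face} {Φ : Flag Face} (hgh : g • Φ = h • Φ) : g = h :=
  inv_mul_eq_one.1 <| A.eq_one_of_smul_eq_self (by rw [mul_smul, ← hgh, inv_smul_smul])

lemma SameOrbit.symm {Φ Ψ : Flag Face} (h : SameOrbit Φ Ψ) : SameOrbit Ψ Φ := by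
  obtain ⟨g, rfl⟩ := h
  exact ⟨g⁻¹, inv_smul_smul g Φ⟩

lemma SameOrbit.trans {Φ Ψ X : Flag Face} (h₁ : SameOrbit Φ Ψ) (h₂ : SameOrbit Ψ X) :
    SameOrbit Φ X := by
  obtain ⟨g, rfl⟩ := h₁
  obtain ⟨h, rfl⟩ := h₂
  exact ⟨h * g, mul_smul h g Φ⟩

lemma SameOrbit.adj {Φ Ψ : Flag Face} (h : SameOrbit Φ Ψ) {i : ℕ} (hi : i < n) :
    SameOrbit (A.adj Φ i) (A.adj Ψ i) := by
  obtain ⟨g, rfl⟩ := h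
  exact ⟨g, A.smul_adj g Φ hi⟩

lemma TwoOrbit.sameOrbit_of_not_sameOrbit {A : AbstractPolytope n Face} (h2 : A.TwoOrbit)
    {X Y Z : Flag Face} (hXY : ¬ SameOrbit X Y) (hXZ : ¬ SameOrbit X Z) : SameOrbit Y Z := by
  obtain ⟨Φ₁, Φ₂, -, hall⟩ := h2
  rcases hall X with hX | hX <;> rcases hall Y with hY | hY <;> rcases hall Z with hZ | hZ <;>
    first
      | exact hY.trans hZ.symm
      | exact absurd (hX.trans hY.symm) hXY
      | exact absurd (hX.trans hZ.symm) hXZ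

lemma TwoOrbit.not_sameOrbit_adj {A : AbstractPolytope n Face} (h2 : A.TwoOrbit) {i : ℕ}
    (hi : i < n) {Ψ : Flag Face} (hΨ : ¬ SameOrbit Ψ (A.adj Ψ i)) (X : Flag Face) :
    ¬ SameOrbit X (A.adj X i) := by
  intro hX
  by_cases hΨX : SameOrbit Ψ X
  · exact hΨ (hΨX.trans (hX.trans (hΨX.adj A hi).symm))
  · apply hΨX
    have hΨiX := ((h2.sameOrbit_of_not_sameOrbit hΨ hΨX).adj A hi)
    rw [A.adj_adj Ψ hi] at hΨiX
    exact hΨiX.trans hX.symm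

lemma InClass.not_sameOrbit_adj {A : AbstractPolytope n Face} {I : Set ℕ} (hI : A.InClass I)
    (h2 : A.TwoOrbit) {i : ℕ} (hi : i < n) (hiI : i ∉ I) (X : Flag Face) :
    ¬ SameOrbit X (A.adj X i) := by
  obtain ⟨Ψ, hΨ⟩ : ∃ Ψ : Flag Face, ¬ SameOrbit Ψ (A.adj Ψ i) := by
    by_contra! hall
    exact hiI ((hI.2 i hi).2 hall)
  exact h2.not_sameOrbit_adj hi hΨ X

lemma reflTransGen_adjOutside_mem_orbits {I J : Set ℕ} {Φ : Flag Face}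
    {ρ : ℕ → (Face ≃o Face)} {α β : ℕ → ℕ → (Face ≃o Face)}
    (hρ : ∀ i ∈ I, (ρ i) • Φ = A.adj Φ i)
    (hα : ∀ j k : ℕ, j < n → k < n → j ∉ I → k ∉ I →
        (α j k) • Φ = A.adj (A.adj Φ j) k)
    (hβ : ∀ j : ℕ, ∀ i ∈ I, j < n → j ∉ I →
        (β j i) • Φ = A.adj (A.adj (A.adj Φ j) i) j)
    {H : Subgroup (Face ≃o Face)} (hρH : ∀ i ∈ I, i ∉ J → ρ i ∈ H)
    (hαH : ∀ j k : ℕ, j < n → k < n → j ∉ I → k ∉ I → j ∉ J → k ∉ J → α j k ∈ H)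
    (hβH : ∀ j : ℕ, ∀ i ∈ I, i ∉ J → j < n → j ∉ I → j ∉ J → β j i ∈ H)
    {Ψ : Flag Face} (hΨ : ReflTransGen (A.AdjOutside J) Φ Ψ) :
    (∃ h ∈ H, Ψ = h • Φ) ∨ ∃ h ∈ H, ∃ j < n, j ∉ I ∧ j ∉ J ∧ Ψ = h • A.adj Φ j := by
  induction hΨ with
  | refl => exact .inl ⟨1, H.one_mem, (one_smul _ _).symm⟩
  | tail _ hstep ih =>
    obtain ⟨i, hin, hiJ, rfl⟩ := hstep
    rcases ih with ⟨h, hh, rfl⟩ | ⟨h, hh, j, hjn, hjI, hjJ, rfl⟩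
    · rw [← A.smul_adj h Φ hin]
      by_cases hiI : i ∈ I
      · exact .inl ⟨h * ρ i, H.mul_mem hh (hρH i hiI hiJ), by rw [mul_smul, hρ i hiI]⟩
      · exact .inr ⟨h, hh, i, hin, hiI, hiJ, rfl⟩
    · rw [← A.smul_adj h _ hin]
      by_cases hiI : i ∈ I
      · -- `α_{j,i,j}` maps `Φ^j` to `Φ^{j,i,j,j} = Φ^{j,i}`
        refine .inr ⟨h * β j i, H.mul_mem hh (hβH j i hiI hiJ hjn hjI hjJ), j, hjn, hjI, hjJ, ?_⟩
        rw [mul_smul, A.smul_adj _ _ hjn, hβ j i hiI hjn hjI, A.adj_adj _ hjn]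
      · exact .inl ⟨h * α j i, H.mul_mem hh (hαH j i hjn hin hjI hiI hjJ hiJ),
          by rw [mul_smul, hα j i hjn hin hjI hiI]⟩

end AbstractPolytope

open AbstractPolytope in
/-- For each `J ⊆ N`, the stabilizer of the subchain `Φ_J` of the base
flag equals the distinguished subgroup `Γ_J`, generated by the distinguished generators
whose indices all avoid `J`. -/
theorem stmt11 {n : ℕ} {Face : Type*} [PartialOrder Face] (A : AbstractPolytope n Face)
    (I : Set ℕ) (h2 : A.TwoOrbit) (hI : A.InClass I)
    (Φ : Flag Face)
    (ρ : ℕ → (Face ≃o Face)) (α : ℕ → ℕ → (Face ≃o Face)) (β : ℕ → ℕ → (Face ≃o Face))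
    (hρ : ∀ i ∈ I, (ρ i) • Φ = A.adj Φ i)
    (hα : ∀ j k : ℕ, j < n → k < n → j ∉ I → k ∉ I →
        (α j k) • Φ = A.adj (A.adj Φ j) k)
    (hβ : ∀ j : ℕ, ∀ i ∈ I, j < n → j ∉ I →
        (β j i) • Φ = A.adj (A.adj (A.adj Φ j) i) j)
    (J : Set ℕ) (hJ : ∀ j ∈ J, j < n) :
    Subgroup.closure
      ({x : Face ≃o Face | ∃ i, i ∈ I ∧ i ∉ J ∧ x = ρ i}
        ∪ {x : Face ≃o Face | ∃ j k : ℕ, j < n ∧ k < n ∧ j ∉ I ∧ k ∉ I ∧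
            j ∉ J ∧ k ∉ J ∧ x = α j k}
        ∪ {x : Face ≃o Face | ∃ j i : ℕ, i ∈ I ∧ i ∉ J ∧ j < n ∧ j ∉ I ∧ j ∉ J ∧
            x = β j i})
      = ⨅ j ∈ J, A.faceStab (A.faceAt Φ (j : ℤ)) := by
  change distinguishedSubgroup n I J ρ α β = _
  apply le_antisymm
  · rw [distinguishedSubgroup, Subgroup.closure_le]
    rintro x ((⟨i, hiI, hiJ, rfl⟩ | ⟨j, k, hjn, hkn, hjI, hkI, hjJ, hkJ, rfl⟩) |
      ⟨j, i, hiI, hiJ, hjn, hjI, hjJ, rfl⟩) <;> rw [SetLike.mem_coe, A.mem_iInf_faceStab_iff hJ]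
    · exact .single ⟨i, hI.1 i hiI, hiJ, hρ i hiI⟩
    · exact (Relation.ReflTransGen.single ⟨j, hjn, hjJ, rfl⟩).tail
        ⟨k, hkn, hkJ, hα j k hjn hkn hjI hkI⟩
    · exact ((Relation.ReflTransGen.single ⟨j, hjn, hjJ, rfl⟩).tail
        ⟨i, hI.1 i hiI, hiJ, rfl⟩).tail ⟨j, hjn, hjJ, hβ j i hiI hjn hjI⟩
  · intro g hg
    rw [A.mem_iInf_faceStab_iff hJ] at hg
    rcases A.reflTransGen_adjOutside_mem_orbits hρ hα hβ
        rho_mem_distinguishedSubgroup alpha_mem_distinguishedSubgroup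
        beta_mem_distinguishedSubgroup hg with
      ⟨h, hh, hgh⟩ | ⟨h, -, j, hjn, hjI, -, hgh⟩
    · rwa [A.eq_of_smul_eq hgh]
    · refine absurd ?_ (hI.not_sameOrbit_adj h2 hjn hjI Φ)
      exact ⟨h⁻¹ * g, by rw [mul_smul, hgh, inv_smul_smul]⟩
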